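/- For all positive integers k and l, the identity t_{k,l} = z_l ∘ z_{k+l} ∘ z_k holds as maps on semistandard skew tableaux with entries ≤ k+l; that is, for every skew shape λ/μ and every weight a of length k+l, applying z_k, then z_{k+l}, then z_l to any A ∈ YT(λ/μ, a) gives t_{k,l}(A). -/
import Mathlib


/-!
Common setup: a (skew) semistandard Young tableau with entries `≤ m` is encoded by
its Gelfand–Tsetlin pattern `g : ℕ → ℕ → ℕ`, where `g i j = μ_i +` (number of entries
`≤ j` in row `i`); rows `i = 0, 1, 2, …` are counted from the top, entry values are
`1, …, m`, and columns are `j = 0, …, m` (column `0` is the inner shape `μ`,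
column `m` is the outer shape `λ`).  All maps in the paper are realized concretely
via Bender–Knuth transformations, following Propositions 1–3 of the paper.
-/

namespace YoungTableauBijections

/-- Gelfand–Tsetlin-type encoding of a skew semistandard Young tableau. -/
abbrev GT : Type := ℕ → ℕ → ℕ

/-- `p` is a partition: weakly decreasing, finitely many nonzero parts (0-indexed). -/
def IsPartition (p : ℕ → ℕ) : Prop :=
  (∀ i, p (i + 1) ≤ p i) ∧ ∃ N, ∀ i, N ≤ i → p i = 0

/-- The number of (nonzero) rows `ℓ(p)` of a partition. -/
noncomputable def numRows (p : ℕ → ℕ) : ℕ := sInf {N | ∀ i, N ≤ i → p i = 0}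

/-- The size `|p|` of a partition (or of a weight). -/
noncomputable def psize (p : ℕ → ℕ) : ℕ := ∑' i, p i

/-- `mu ⊆ lam` componentwise. -/
def subShape (mu lam : ℕ → ℕ) : Prop := ∀ i, mu i ≤ lam i

/-- `g` encodes a semistandard skew tableau with entries `≤ m` (weakly increasing
rows, strictly increasing columns, finitely many cells); columns beyond `m` are
required to be constant (no junk). -/
def IsSSYT (m : ℕ) (g : GT) : Prop :=
  (∀ i j, j < m → g i j ≤ g i (j + 1)) ∧
  (∀ i j, j < m → g (i + 1) (j + 1) ≤ g i j) ∧
  (∀ i, g (i + 1) 0 ≤ g i 0) ∧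
  (∃ N, ∀ i, N ≤ i → g i m = 0) ∧
  (∀ i j, m ≤ j → g i j = g i m)

/-- The number of entries equal to `j + 1` in row `i`
(the recording matrix, 0-indexed). -/
def rowCount (g : GT) (i j : ℕ) : ℕ := g i (j + 1) - g i j

/-- The weight: `wt g j` is the total number of entries equal to `j + 1`. -/
noncomputable def wt (g : GT) (j : ℕ) : ℕ := ∑' i, rowCount g i j

/-- `g ∈ YT(λ/μ, a)`: semistandard, of shape `λ/μ`, entries `≤ m`, and weight `a`
(where `a j` is the required number of entries equal to `j + 1`). -/
def MemYT (m : ℕ) (lam mu a : ℕ → ℕ) (g : GT) : Prop :=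
  IsSSYT m g ∧ (∀ i, g i 0 = mu i) ∧ (∀ i, g i m = lam i) ∧
  ∀ j, j < m → wt g j = a j

/-- The reversed weight `a* = (a_m, …, a_1)` (0-indexed). -/
def wrev (m : ℕ) (a : ℕ → ℕ) : ℕ → ℕ := fun j => a (m - 1 - j)

/-- The lattice-word (Littlewood–Richardson) condition: every initial segment of the
right-to-left, top-to-bottom reading word has at least as many entries `r` as
entries `r + 1`. -/
def IsLattice (m : ℕ) (g : GT) : Prop :=
  ∀ j i : ℕ, j + 1 < m →
    (∑ q ∈ Finset.range (i + 1), rowCount g q (j + 1)) ≤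
      ∑ q ∈ Finset.range i, rowCount g q j

/-- `g ∈ LR(λ/μ, ν)`. -/
def MemLR (m : ℕ) (lam mu nu : ℕ → ℕ) (g : GT) : Prop :=
  MemYT m lam mu nu g ∧ IsLattice m g

/-- The canonical tableau `Can(λ)`: row `i` is filled with entries `i + 1`. -/
def canGT (lam : ℕ → ℕ) : GT := fun i j => if i < j then lam i else 0

/-- The Bender–Knuth transformation `s_r` (`1 ≤ r ≤ m - 1`), acting on GT patterns:
it replaces `a_{i,r}` by
`min (a_{i,r+1}) (a_{i-1,r-1}) + max (a_{i,r-1}) (a_{i+1,r+1}) - a_{i,r}`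
(with the top-row convention that the `min` term is `a_{i,r+1}` for the first row). -/
def bk (r : ℕ) (g : GT) : GT := fun i j =>
  if j = r then
    (if i = 0 then g i (r + 1) else min (g i (r + 1)) (g (i - 1) (r - 1))) +
      max (g i (r - 1)) (g (i + 1) (r + 1)) - g i r
  else g i j

/-- Apply a word in the Bender–Knuth generators; the rightmost letter acts first. -/
def applyWord : List ℕ → GT → GT
  | [], g => g
  | r :: w, g => bk r (applyWord w g)

/-- The block `(s_b s_{b-1} ⋯ s_1)`. -/
def descBlock (b : ℕ) : List ℕ := (List.range b).map fun i => b - i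

/-- `z_m = (s_1)(s_2 s_1)(s_3 s_2 s_1) ⋯ (s_{m-1} ⋯ s_2 s_1)` as a word. -/
def zWord (m : ℕ) : List ℕ := ((List.range (m - 1)).map fun q => descBlock (q + 1)).flatten

/-- The block `(s_j s_{j+1} ⋯ s_{j+r-1})`. -/
def ascBlock (j r : ℕ) : List ℕ := (List.range r).map fun i => j + i

/-- `t_{r,l} = (s_l s_{l+1} ⋯ s_{l+r-1}) ⋯ (s_2 s_3 ⋯ s_{r+1})(s_1 s_2 ⋯ s_r)`
as a word (here `m = r + l`). -/
def tWord (r l : ℕ) : List ℕ := ((List.range l).map fun q => ascBlock (l - q) r).flatten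

/-- The map `z_m`. -/
def zmapGT (m : ℕ) : GT → GT := applyWord (zWord m)

/-- The map `t_{r,l}`. -/
def tmapGT (r l : ℕ) : GT → GT := applyWord (tWord r l)

/-- Cut all columns beyond column `m` (normalize to entries `≤ m`). -/
def restrictGT (m : ℕ) (g : GT) : GT := fun i j => g i (min j m)

/-- The Schützenberger involution `ξ` on (skew) tableaux with entries `≤ m`,
computed by the Bender–Knuth word `z_m` (Proposition 1 of the paper). -/
def schutz (m : ℕ) (g : GT) : GT := restrictGT m (zmapGT m g)

/-- `glue r B A` encodes `B ⋆ Ã`: the union of `B` (entries `≤ r`) with `A`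
relabelled to have entries `r + 1, r + 2, …`. -/
def glue (r : ℕ) (B A : GT) : GT := fun i j => if j ≤ r then B i j else A i (j - r)

/-- Shift columns left by `s` (relabel entries by subtracting `s`). -/
def shiftCols (s : ℕ) (g : GT) : GT := fun i j => g i (j + s)

/-- Tableau switching `ζ(B, A) = (A′, B′)`, where `B` has entries `≤ r` and `A` has
entries `≤ l`: glue, apply `t_{r,l}`, and split again (Proposition 2 of the paper). -/
def switch (r l : ℕ) (B A : GT) : GT × GT :=
  (restrictGT l (tmapGT r l (glue r B A)),
    restrictGT r (shiftCols l (tmapGT r l (glue r B A))))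

/-- Jeu de taquin rectification `ψ` of a skew tableau with entries `≤ l`:
switch it past the canonical tableau of its inner shape. -/
noncomputable def rect (l : ℕ) (A : GT) : GT :=
  (switch (numRows fun i => A i 0) l (canGT fun i => A i 0) A).1

/-- `V ∈ Mat(a, b)`: a `k × k` nonnegative integer matrix (0-indexed) with row
sums `a` and column sums `b`. -/
def MemMat (k : ℕ) (a b : ℕ → ℕ) (V : ℕ → ℕ → ℕ) : Prop :=
  (∀ i, i < k → ∑ j ∈ Finset.range k, V i j = a i) ∧
  (∀ j, j < k → ∑ i ∈ Finset.range k, V i j = b j)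

/-- The skew tableau `Y ∈ YT(π/σ, b)` of Proposition 3: row `(k+1) - i` (1-indexed)
contains exactly `v_{i,j}` entries equal to `j`. -/
def rskY (k : ℕ) (V : ℕ → ℕ → ℕ) : GT := fun p j =>
  if p < k then
    (∑ q ∈ Finset.range (k - p - 1), ∑ s ∈ Finset.range k, V q s) +
      ∑ q ∈ Finset.range (min j k), V (k - p - 1) q
  else 0

/-- The companion skew tableau `X` of Proposition 3 (built from the transpose). -/
def rskX (k : ℕ) (V : ℕ → ℕ → ℕ) : GT := rskY k fun i j => V j i

/-- The RSK correspondence `φ(V) = (B, A)` (insertion tableau, recording tableau),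
realized via jeu de taquin as in Proposition 3 of the paper. -/
noncomputable def rsk (k : ℕ) (V : ℕ → ℕ → ℕ) : GT × GT :=
  (rect k (rskY k V), rect k (rskX k V))

/-- The rotated complemented tableau `A^•` of a straight-shape tableau `A` with
entries `≤ k` and at most `l` rows: `A^• i j = λ_1 - A (l-1-i) (k-j)`. -/
def rotGT (k l : ℕ) (A : GT) : GT := fun i j =>
  if i < l then A 0 k - A (l - 1 - i) (k - min j k) else 0

/-- `composeGT q s Ytop Xbot` encodes the composition: `Ytop` occupies the top `q`
rows, shifted `s` columns to the right, sitting above and to the right of `Xbot`. -/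
def composeGT (q s : ℕ) (Ytop Xbot : GT) : GT := fun i j =>
  if i < q then s + Ytop i j else Xbot (i - q) j

/-- `B ∈ CF(μ, ν, λ)`: `B ∈ YT(μ, λ - ν)` and `B ∘ Can(ν) ∈ LR(μ ∘ ν, λ)`
(all entries `≤ l`, where `l = ℓ(λ)`). -/
def MemCF (l : ℕ) (mu nu lam : ℕ → ℕ) (B : GT) : Prop :=
  MemYT l mu (fun _ => 0) (fun j => lam j - nu j) B ∧
  MemLR l (fun i => if i < l then mu 0 + nu i else mu (i - l))
    (fun i => if i < l then mu 0 else 0) lam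
    (composeGT l (mu 0) (canGT nu) B)

/-- `B ∈ CF*(μ, ν, λ)`: `B ∈ YT(μ, (λ - ν)*)` and `B^• ∘ Can(ν) ∈ LR(μ^• ∘ ν, λ)`. -/
def MemCFstar (l : ℕ) (mu nu lam : ℕ → ℕ) (B : GT) : Prop :=
  MemYT l mu (fun _ => 0) (wrev l fun j => lam j - nu j) B ∧
  MemLR l
    (fun i => if i < l then mu 0 + nu i
      else if i - l < numRows mu then mu 0 else 0)
    (fun i => if i < l then mu 0
      else if i - l < numRows mu then mu 0 - mu (numRows mu - 1 - (i - l)) else 0)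
    lam
    (composeGT l (mu 0) (canGT nu) (rotGT l (numRows mu) B))

/-- The extended recording matrix of `A` (1-indexed), with the conventions
`c_{0,q} = 0`, `c_{i,0} = μ_i`. -/
def cext (A : GT) (i q : ℕ) : ℕ :=
  if i = 0 then 0 else if q = 0 then A (i - 1) 0 else rowCount A (i - 1) (q - 1)

/-- The recording matrix `D = (d_{i,j})` of `γ(A)` (1-indexed):
`d_{i,j} = Σ_{q=0}^{l-j} c_{l-j+i,q} - Σ_{q=0}^{l-j+1} c_{l-j+1+i,q}`. -/
def dmat (l : ℕ) (A : GT) (i j : ℕ) : ℕ :=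
  (∑ q ∈ Finset.range (l - j + 1), cext A (l - j + i) q) -
    ∑ q ∈ Finset.range (l - j + 2), cext A (l - j + 1 + i) q

/-- The map `γ`, on GT patterns (its output is the straight-shape tableau of shape
`μ` whose recording matrix is `D`). -/
def gammaMap (l : ℕ) (A : GT) : GT := fun i j =>
  ∑ q ∈ Finset.Icc 1 (min j l), dmat l A (i + 1) q

/-- The companion map `τ`: `τ(A)` is the straight-shape tableau whose recording
matrix is `e_{i,j} = c_{j,i}`. -/
def tauMap (l : ℕ) (A : GT) : GT := fun i j =>
  ∑ q ∈ Finset.range (min j l), rowCount A q i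

/-- The reversal map `χ = ζ ∘ ξ ∘ ζ`:
`χ(A) = A″` where `(A′, C′) = ζ(Can(μ), A)` and `(C″, A″) = ζ(ξ^N(A′), C′)`. -/
def chiMap (r l : ℕ) (mu : ℕ → ℕ) (A : GT) : GT :=
  (switch l r (schutz l (switch r l (canGT mu) A).1) ((switch r l (canGT mu) A).2)).2

/-- The octahedral map `ς(A, B) = (B′, D)` defined by three tableau switchings. -/
noncomputable def octa (k1 k2 k3 : ℕ) (lam : ℕ → ℕ) (A B : GT) : GT × GT :=
  let C1 := (switch k1 k2 (canGT lam) A).2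
  let P := switch k1 k3 C1 B
  let pi := fun i => P.1 i k3
  (P.1, (switch (numRows pi) k1 (canGT pi) P.2).2)

-- PART1: core bk lemmas
lemma bk_ne (r : ℕ) (g : GT) (i j : ℕ) (h : j ≠ r) : bk r g i j = g i j := by
  simp [bk, h]

lemma bk_eq (r : ℕ) (g : GT) (i : ℕ) :
    bk r g i r =
      (if i = 0 then g i (r + 1) else min (g i (r + 1)) (g (i - 1) (r - 1))) +
        max (g i (r - 1)) (g (i + 1) (r + 1)) - g i r := by
  simp [bk]

lemma bk_bounds {m : ℕ} {g : GT} (hg : IsSSYT m g) {r : ℕ} (hr : 1 ≤ r) (hrm : r < m)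
    (i : ℕ) :
    max (g i (r - 1)) (g (i + 1) (r + 1)) ≤ g i r ∧
      g i r ≤ (if i = 0 then g i (r + 1) else min (g i (r + 1)) (g (i - 1) (r - 1))) := by
  obtain ⟨h1, h2, h3, h4, h5⟩ := hg
  have e1 : r - 1 + 1 = r := by omega
  have hrow : g i (r - 1) ≤ g i r := by
    have := h1 i (r - 1) (by omega); rwa [e1] at this
  have hcol : g (i + 1) (r + 1) ≤ g i r := h2 i r hrm
  refine ⟨max_le hrow hcol, ?_⟩
  by_cases hi : i = 0
  · simpa [hi] using h1 0 r hrm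
  · simp only [hi, if_false]
    refine le_min (h1 i r hrm) ?_
    have := h2 (i - 1) (r - 1) (by omega)
    have e2 : i - 1 + 1 = i := by omega
    rwa [e1, e2] at this

lemma bk_bk {m : ℕ} {g : GT} (hg : IsSSYT m g) {r : ℕ} (hr : 1 ≤ r) (hrm : r < m) :
    bk r (bk r g) = g := by
  funext i j
  by_cases hj : j = r
  · rw [hj]
    have hb := bk_bounds hg hr hrm i
    rw [bk_eq, bk_ne _ _ _ _ (by omega : r + 1 ≠ r), bk_ne _ _ _ _ (by omega : r - 1 ≠ r),
      bk_ne _ _ _ _ (by omega : r - 1 ≠ r), bk_ne _ _ _ _ (by omega : r + 1 ≠ r), bk_eq]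
    by_cases hi : i = 0 <;> simp only [hi, if_true, if_false] at hb ⊢ <;> omega
  · rw [bk_ne _ _ _ _ hj, bk_ne _ _ _ _ hj]

lemma bk_ssyt {m : ℕ} {g : GT} (hg : IsSSYT m g) {r : ℕ} (hr : 1 ≤ r) (hrm : r < m) :
    IsSSYT m (bk r g) := by
  have hb := bk_bounds hg hr hrm
  obtain ⟨h1, h2, h3, h4, h5⟩ := hg
  refine ⟨?_, ?_, ?_, ?_, ?_⟩
  · -- rows weakly increase
    intro i j hj
    by_cases hjr : j = r
    · rw [hjr, bk_eq, bk_ne _ _ _ _ (by omega : r + 1 ≠ r)]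
      have := hb i
      by_cases hi : i = 0 <;> simp only [hi, if_true, if_false] at this ⊢ <;> omega
    · by_cases hjr1 : j + 1 = r
      · rw [bk_ne _ _ _ _ hjr, hjr1, bk_eq]
        have := hb i
        have e : r - 1 = j := by omega
        rw [e] at this ⊢
        by_cases hi : i = 0 <;> simp only [hi, if_true, if_false] at this ⊢ <;> omega
      · rw [bk_ne _ _ _ _ hjr, bk_ne _ _ _ _ hjr1]; exact h1 i j hj
  · -- columns strictly increase
    intro i j hj
    by_cases hjr1 : j + 1 = r
    · rw [bk_ne _ _ _ _ (by omega : j ≠ r), hjr1, bk_eq]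
      have := hb (i + 1)
      have e : r - 1 = j := by omega
      rw [e] at this ⊢
      simp only [Nat.add_sub_cancel] at this ⊢
      rw [if_neg (show ¬(i + 1 = 0) by omega)] at this ⊢
      omega
    · by_cases hjr : j = r
      · rw [hjr, bk_ne _ _ _ _ (by omega : r + 1 ≠ r), bk_eq]
        have := hb i
        by_cases hi : i = 0 <;> simp only [hi, if_true, if_false] at this ⊢ <;> omega
      · rw [bk_ne _ _ _ _ hjr, bk_ne _ _ _ _ hjr1]; exact h2 i j hj
  · intro i
    rw [bk_ne _ _ _ _ (by omega : (0:ℕ) ≠ r), bk_ne _ _ _ _ (by omega : (0:ℕ) ≠ r)]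
    exact h3 i
  · obtain ⟨N, hN⟩ := h4
    refine ⟨N, fun i hi => ?_⟩
    rw [bk_ne _ _ _ _ (by omega : m ≠ r)]
    exact hN i hi
  · intro i j hj
    rw [bk_ne _ _ _ _ (by omega : j ≠ r), bk_ne _ _ _ _ (by omega : m ≠ r)]
    exact h5 i j hj

lemma bk_comm {r t : ℕ} (h : r + 2 ≤ t ∨ t + 2 ≤ r) (g : GT) :
    bk r (bk t g) = bk t (bk r g) := by
  funext i j
  by_cases hjr : j = r
  · rw [hjr, bk_eq, bk_ne _ _ _ _ (by omega : r + 1 ≠ t), bk_ne _ _ _ _ (by omega : r - 1 ≠ t),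
      bk_ne _ _ _ _ (by omega : r - 1 ≠ t), bk_ne _ _ _ _ (by omega : r + 1 ≠ t),
      bk_ne _ _ _ _ (by omega : r ≠ t), bk_ne _ _ _ _ (by omega : r ≠ t), bk_eq]
  · by_cases hjt : j = t
    · rw [hjt, bk_ne _ _ _ _ (by omega : t ≠ r), bk_eq, bk_eq,
        bk_ne _ _ _ _ (by omega : t + 1 ≠ r), bk_ne _ _ _ _ (by omega : t - 1 ≠ r),
        bk_ne _ _ _ _ (by omega : t - 1 ≠ r), bk_ne _ _ _ _ (by omega : t + 1 ≠ r),
        bk_ne _ _ _ _ (by omega : t ≠ r)]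
    · rw [bk_ne _ _ _ _ hjr, bk_ne _ _ _ _ hjt, bk_ne _ _ _ _ hjt, bk_ne _ _ _ _ hjr]
-- PART2: word machinery
lemma applyWord_append (u v : List ℕ) (g : GT) :
    applyWord (u ++ v) g = applyWord u (applyWord v g) := by
  induction u with
  | nil => rfl
  | cons r u ih => simp [applyWord, ih]

/-- all letters of `w` lie in `[1, m)`. -/
def GoodW (m : ℕ) (w : List ℕ) : Prop := ∀ r ∈ w, 1 ≤ r ∧ r < m

lemma applyWord_ssyt {m : ℕ} {w : List ℕ} (hw : GoodW m w) {g : GT} (hg : IsSSYT m g) :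
    IsSSYT m (applyWord w g) := by
  induction w with
  | nil => exact hg
  | cons r u ih =>
    have hr := hw r (by simp)
    exact bk_ssyt (ih fun t ht => hw t (by simp [ht])) hr.1 hr.2

lemma bk_word_comm {r : ℕ} {w : List ℕ} (h : ∀ t ∈ w, r + 2 ≤ t ∨ t + 2 ≤ r) (g : GT) :
    bk r (applyWord w g) = applyWord w (bk r g) := by
  induction w with
  | nil => rfl
  | cons t u ih =>
    simp only [applyWord]
    rw [← ih fun s hs => h s (by simp [hs]), bk_comm (h t (by simp))]

lemma word_word_comm {u v : List ℕ} (h : ∀ s ∈ u, ∀ t ∈ v, s + 2 ≤ t ∨ t + 2 ≤ s) (g : GT) :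
    applyWord u (applyWord v g) = applyWord v (applyWord u g) := by
  induction u with
  | nil => rfl
  | cons r u ih =>
    simp only [applyWord]
    rw [ih fun s hs => h s (by simp [hs]), bk_word_comm fun t ht => h r (by simp) t ht]

lemma revCancel {m : ℕ} {w : List ℕ} (hw : GoodW m w) {g : GT} (hg : IsSSYT m g) :
    applyWord (w.reverse ++ w) g = g := by
  induction w generalizing g with
  | nil => rfl
  | cons r u ih =>
    have hr := hw r (by simp)
    have hu : GoodW m u := fun t ht => hw t (by simp [ht])
    rw [List.reverse_cons, applyWord_append, applyWord_append,
      show applyWord (r :: u) g = bk r (applyWord u g) from rfl,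
      show ∀ x, applyWord [r] x = bk r x from fun _ => rfl,
      bk_bk (applyWord_ssyt hu hg) hr.1 hr.2, ← applyWord_append, ih hu hg]
-- PART3: structural list lemmas
/-- The word `[k + l, k + l - 1, …, k + 1]`. -/
def dwWord (l k : ℕ) : List ℕ := (List.range l).map fun i => k + l - i

lemma descBlock_succ (b : ℕ) : descBlock (b + 1) = (b + 1) :: descBlock b := by
  simp only [descBlock, List.range_succ_eq_map, List.map_cons, Nat.sub_zero, List.map_map]
  congr 1
  apply List.map_congr_left
  intro i _
  simp only [Function.comp_apply]
  omega

lemma ascBlock_succ (j r : ℕ) : ascBlock j (r + 1) = ascBlock j r ++ [j + r] := by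
  simp [ascBlock, List.range_succ]

lemma ascBlock_cons (j r : ℕ) : ascBlock j (r + 1) = j :: ascBlock (j + 1) r := by
  simp only [ascBlock, List.range_succ_eq_map, List.map_cons, Nat.add_zero, List.map_map]
  congr 1
  apply List.map_congr_left
  intro i _
  simp only [Function.comp_apply]
  omega

lemma descBlock_reverse (k : ℕ) : (descBlock k).reverse = ascBlock 1 k := by
  induction k with
  | zero => rfl
  | succ k ih =>
    rw [descBlock_succ, List.reverse_cons, ih, ascBlock_succ]
    congr 2
    omega

lemma ascBlock_one_reverse (k : ℕ) : (ascBlock 1 k).reverse = descBlock k := by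
  rw [← descBlock_reverse, List.reverse_reverse]

lemma zWord_succ (k : ℕ) : zWord (k + 1) = zWord k ++ descBlock k := by
  cases k with
  | zero => rfl
  | succ k =>
    simp only [zWord, Nat.add_sub_cancel, List.range_succ, List.map_append, List.map_cons,
      List.map_nil, List.flatten_append]
    simp

lemma tWord_succ (k l : ℕ) : tWord k (l + 1) = ascBlock (l + 1) k ++ tWord k l := by
  simp only [tWord, List.range_succ_eq_map, List.map_cons, Nat.sub_zero, List.map_map,
    List.flatten_cons]
  congr 2
  apply List.map_congr_left
  intro i _
  simp only [Function.comp_apply]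
  congr 1
  omega

lemma dwWord_succ (l k : ℕ) : dwWord (l + 1) k = (k + l + 1) :: dwWord l k := by
  simp only [dwWord, List.range_succ_eq_map, List.map_cons, Nat.sub_zero, List.map_map]
  rw [show k + l + 1 = k + (l + 1) from by omega]
  congr 1
  all_goals
    apply List.map_congr_left
    intro i _
    simp only [Function.comp_apply]
    omega

lemma descBlock_split (k l : ℕ) : descBlock (k + l) = dwWord l k ++ descBlock k := by
  rw [descBlock, dwWord, descBlock, show k + l = l + k from by omega, List.range_add,
    List.map_append, List.map_map]
  congr 1
  all_goals
    apply List.map_congr_left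
    intro i hi
    simp only [Function.comp_apply]
    omega

lemma mem_descBlock {b t : ℕ} (h : t ∈ descBlock b) : 1 ≤ t ∧ t ≤ b := by
  simp only [descBlock, List.mem_map, List.mem_range] at h
  obtain ⟨i, hi, rfl⟩ := h
  omega

lemma mem_ascBlock {j r t : ℕ} (h : t ∈ ascBlock j r) : j ≤ t ∧ t < j + r := by
  simp only [ascBlock, List.mem_map, List.mem_range] at h
  obtain ⟨i, hi, rfl⟩ := h
  omega

lemma mem_dwWord {l k t : ℕ} (h : t ∈ dwWord l k) : k + 1 ≤ t ∧ t ≤ k + l := by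
  simp only [dwWord, List.mem_map, List.mem_range] at h
  obtain ⟨i, hi, rfl⟩ := h
  omega

lemma mem_zWord {k t : ℕ} (h : t ∈ zWord k) : 1 ≤ t ∧ t < k := by
  simp only [zWord, List.mem_flatten, List.mem_map, List.mem_range] at h
  obtain ⟨w, ⟨q, hq, rfl⟩, hw⟩ := h
  have := mem_descBlock hw
  omega

lemma mem_tWord {k l t : ℕ} (h : t ∈ tWord k l) : 1 ≤ t ∧ t < k + l := by
  simp only [tWord, List.mem_flatten, List.mem_map, List.mem_range] at h
  obtain ⟨w, ⟨q, hq, rfl⟩, hw⟩ := h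
  have := mem_ascBlock hw
  omega

lemma goodW_zWord {m k : ℕ} (h : k ≤ m) : GoodW m (zWord k) :=
  fun t ht => by have := mem_zWord ht; omega

lemma goodW_descBlock {m b : ℕ} (h : b < m) : GoodW m (descBlock b) :=
  fun t ht => by have := mem_descBlock ht; omega

lemma goodW_ascBlock1 {m k : ℕ} (h : k < m) : GoodW m (ascBlock 1 k) :=
  fun t ht => by have := mem_ascBlock ht; omega
-- PART4: main identities
lemma applyWord_cons (r : ℕ) (w : List ℕ) (g : GT) :
    applyWord (r :: w) g = bk r (applyWord w g) := rfl

lemma applyWord_concat (w : List ℕ) (r : ℕ) (g : GT) :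
    applyWord (w ++ [r]) g = applyWord w (bk r g) := by
  rw [applyWord_append]; rfl

/-- `Q(k)` : `z_{k+1} = (s_1 ⋯ s_k) ∘ z_k` (unconditional). -/
lemma qLemma : ∀ (k : ℕ) (g : GT),
    applyWord (zWord (k + 1)) g = applyWord (ascBlock 1 k) (applyWord (zWord k) g) := by
  intro k
  induction k with
  | zero => intro g; rfl
  | succ k ih =>
    intro g
    rw [zWord_succ (k + 1), applyWord_append, ih, descBlock_succ, applyWord_cons,
      ← bk_word_comm (fun t ht => Or.inr (by have := mem_zWord ht; omega))
        (applyWord (descBlock k) g),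
      ← applyWord_append, ← zWord_succ, ascBlock_succ, applyWord_concat,
      Nat.add_comm 1 k]

/-- `z_k` is an involution on semistandard tableaux. -/
lemma zInv {m : ℕ} : ∀ (k : ℕ), k ≤ m → ∀ {g : GT}, IsSSYT m g →
    applyWord (zWord k) (applyWord (zWord k) g) = g := by
  intro k
  induction k with
  | zero => intro _ g _; rfl
  | succ k ih =>
    intro hk g hg
    have hkm : k < m := hk
    rw [qLemma, show applyWord (zWord (k + 1)) g
        = applyWord (zWord k) (applyWord (descBlock k) g) from by
          rw [zWord_succ, applyWord_append],
      ih (by omega) (applyWord_ssyt (goodW_descBlock hkm) hg),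
      ← applyWord_append, ← descBlock_reverse, revCancel (goodW_descBlock hkm) hg]

/-- `D_n ∘ U_n = id` on SSYT. -/
lemma duCancel {m n : ℕ} (hn : n < m) {g : GT} (hg : IsSSYT m g) :
    applyWord (descBlock n) (applyWord (ascBlock 1 n) g) = g := by
  rw [← applyWord_append, ← ascBlock_one_reverse, revCancel (goodW_ascBlock1 hn) hg]

/-- `U_n ∘ D_n = id` on SSYT. -/
lemma udCancel {m n : ℕ} (hn : n < m) {g : GT} (hg : IsSSYT m g) :
    applyWord (ascBlock 1 n) (applyWord (descBlock n) g) = g := by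
  rw [← applyWord_append, ← descBlock_reverse, revCancel (goodW_descBlock hn) hg]

/-- `(#)` : `D_n ∘ z_n = z_n ∘ U_n` on SSYT. -/
lemma sharp {m n : ℕ} (hn : n < m) {g : GT} (hg : IsSSYT m g) :
    applyWord (descBlock n) (applyWord (zWord n) g)
      = applyWord (zWord n) (applyWord (ascBlock 1 n) g) := by
  have hU : IsSSYT m (applyWord (ascBlock 1 n) g) := applyWord_ssyt (goodW_ascBlock1 hn) hg
  conv_lhs => rw [← duCancel hn hg]
  rw [show applyWord (zWord n) (applyWord (descBlock n) (applyWord (ascBlock 1 n) g))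
      = applyWord (zWord (n + 1)) (applyWord (ascBlock 1 n) g) from by
        rw [zWord_succ, applyWord_append],
    qLemma, duCancel hn (applyWord_ssyt (goodW_zWord (le_of_lt hn)) hU)]

/-- `(†)` : `(s_{l+1} ⋯ s_{l+k+1}) ∘ D_l = D_{l+1} ∘ (s_{l+2} ⋯ s_{l+k+1})` (unconditional). -/
lemma dagger (k l : ℕ) (g : GT) :
    applyWord (ascBlock (l + 1) (k + 1)) (applyWord (descBlock l) g)
      = applyWord (descBlock (l + 1)) (applyWord (ascBlock (l + 2) k) g) := by
  rw [ascBlock_cons, applyWord_cons, descBlock_succ, applyWord_cons]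
  exact congrArg (bk (l + 1)) <| word_word_comm (u := ascBlock (l + 2) k) (v := descBlock l)
    (fun s hs t ht => Or.inr (by have := mem_ascBlock hs; have := mem_descBlock ht; omega)) g
-- PART5: final induction
lemma goodW_tWord {m k l : ℕ} (h : k + l ≤ m) : GoodW m (tWord k l) :=
  fun t ht => by have := mem_tWord ht; omega

lemma goodW_ascBlock {m j r : ℕ} (hj : 1 ≤ j) (h : j + r ≤ m) : GoodW m (ascBlock j r) :=
  fun t ht => by have := mem_ascBlock ht; omega

/-- `R(k,l)` : `t_{k,l} ∘ (s_{k+l} ⋯ s_{k+1}) ∘ (s_1 ⋯ s_k) = D_l ∘ (s_{l+1} ⋯ s_{l+k}) ∘ t_{k,l}`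
(unconditional). -/
lemma rLemma {k : ℕ} (hk : 1 ≤ k) : ∀ (l : ℕ) (g : GT),
    applyWord (tWord k l) (applyWord (dwWord l k) (applyWord (ascBlock 1 k) g))
      = applyWord (descBlock l) (applyWord (ascBlock (l + 1) k) (applyWord (tWord k l) g)) := by
  intro l
  induction l with
  | zero => intro g; rfl
  | succ l ih =>
    intro g
    rw [tWord_succ, dwWord_succ, applyWord_cons, applyWord_append,
      ← bk_word_comm (r := k + l + 1) (w := tWord k l)
        (fun t ht => Or.inr (by have := mem_tWord ht; omega)),
      ih, bk_word_comm (r := k + l + 1) (w := descBlock l)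
        (fun t ht => Or.inr (by have := mem_descBlock ht; omega)),
      applyWord_append, ← dagger k l, ascBlock_succ, applyWord_concat,
      bk_word_comm (r := l + 1 + k) (w := descBlock l)
        (fun t ht => Or.inr (by have := mem_descBlock ht; omega)),
      show l + 1 + k = k + l + 1 from by omega]

/-- The main induction: `z_l ∘ z_{k+l} ∘ z_k = t_{k,l}` on semistandard tableaux. -/
lemma gKey {k : ℕ} (hk : 1 ≤ k) : ∀ (l : ℕ), 1 ≤ l → ∀ (m : ℕ), k + l ≤ m →
    ∀ (g : GT), IsSSYT m g →
    applyWord (zWord l) (applyWord (zWord (k + l)) (applyWord (zWord k) g))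
      = applyWord (tWord k l) g := by
  intro l
  induction l with
  | zero => omega
  | succ l ih =>
    intro _ m hm g hg
    rcases Nat.eq_zero_or_pos l with rfl | hl1
    · -- base case l = 1
      show applyWord (zWord 1) (applyWord (zWord (k + 1)) (applyWord (zWord k) g))
          = applyWord (tWord k 1) g
      rw [show applyWord (zWord 1) = fun x => x from rfl, qLemma,
        zInv k (by omega) hg, show tWord k 1 = ascBlock 1 k ++ tWord k 0 from tWord_succ k 0,
        show tWord k 0 = [] from rfl, List.append_nil]
    · have hkm : k < m := by omega
      have hlm : l < m := by omega
      have hgU : IsSSYT m (applyWord (ascBlock 1 k) g) :=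
        applyWord_ssyt (goodW_ascBlock1 hkm) hg
      have hGdw : GoodW m (dwWord l k) := fun t ht => by have := mem_dwWord ht; omega
      set g1 := applyWord (dwWord l k) (applyWord (ascBlock 1 k) g) with hg1
      have hg1S : IsSSYT m g1 := applyWord_ssyt hGdw hgU
      have hstepb : applyWord (descBlock (k + l)) (applyWord (zWord k) g)
          = applyWord (zWord k) g1 := by
        rw [descBlock_split k l, applyWord_append, sharp hkm hg,
          word_word_comm (u := dwWord l k) (v := zWord k)
            (fun s hs t ht => Or.inr (by have := mem_dwWord hs; have := mem_zWord ht; omega))]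
      have hZk1 : applyWord (zWord (k + (l + 1))) (applyWord (zWord k) g)
          = applyWord (zWord (k + l)) (applyWord (zWord k) g1) := by
        rw [show k + (l + 1) = (k + l) + 1 from by omega, zWord_succ, applyWord_append, hstepb]
      have hIH := ih hl1 m (by omega) g1 hg1S
      have hX : IsSSYT m (applyWord (zWord (k + l)) (applyWord (zWord k) g1)) :=
        applyWord_ssyt (goodW_zWord (by omega)) (applyWord_ssyt (goodW_zWord (by omega)) hg1S)
      have hE : applyWord (zWord (k + l)) (applyWord (zWord k) g1)
          = applyWord (zWord l) (applyWord (tWord k l) g1) := by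
        conv_lhs => rw [← zInv l (by omega) hX]
        rw [hIH]
      have hT1 : IsSSYT m (applyWord (tWord k l) g1) :=
        applyWord_ssyt (goodW_tWord (by omega)) hg1S
      have hT2 : IsSSYT m (applyWord (ascBlock (l + 1) k) (applyWord (tWord k l) g)) :=
        applyWord_ssyt (goodW_ascBlock (by omega) (by omega))
          (applyWord_ssyt (goodW_tWord (by omega)) hg)
      calc applyWord (zWord (l + 1)) (applyWord (zWord (k + (l + 1))) (applyWord (zWord k) g))
          = applyWord (zWord l) (applyWord (descBlock l)
              (applyWord (zWord l) (applyWord (tWord k l) g1))) := by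
            rw [hZk1, hE, zWord_succ l, applyWord_append]
        _ = applyWord (zWord l) (applyWord (zWord l)
              (applyWord (ascBlock 1 l) (applyWord (tWord k l) g1))) := by
            rw [sharp hlm hT1]
        _ = applyWord (ascBlock 1 l) (applyWord (tWord k l) g1) :=
            zInv l (by omega) (applyWord_ssyt (goodW_ascBlock1 hlm) hT1)
        _ = applyWord (ascBlock 1 l) (applyWord (descBlock l)
              (applyWord (ascBlock (l + 1) k) (applyWord (tWord k l) g))) := by
            rw [hg1, rLemma hk l g]
        _ = applyWord (ascBlock (l + 1) k) (applyWord (tWord k l) g) := udCancel hlm hT2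
        _ = applyWord (tWord k (l + 1)) g := by rw [tWord_succ, applyWord_append]
/-- the relation used in the proof of Lemma 1.
For all positive integers `k` and `l`, `t_{k,l} = z_l ∘ z_{k+l} ∘ z_k` as maps on
semistandard skew tableaux with entries `≤ k + l`: for every skew shape `λ/μ` and
weight `a` of length `k + l`, applying `z_k`, then `z_{k+l}`, then `z_l` to any
`A ∈ YT(λ/μ, a)` gives `t_{k,l}(A)`. -/
theorem t_is_z_z_z
    (k l : ℕ) (hk : 1 ≤ k) (hl : 1 ≤ l)
    (lam mu a : ℕ → ℕ)
    (hlam : IsPartition lam) (hmu : IsPartition mu) (hsub : subShape mu lam)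
    (A : GT) (hA : MemYT (k + l) lam mu a A) :
    zmapGT l (zmapGT (k + l) (zmapGT k A)) = tmapGT k l A := by
  have h := gKey hk l hl (k + l) le_rfl A hA.1
  simpa [zmapGT, tmapGT] using h

end YoungTableauBijections
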